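/- arXiv:math/0406177 — 4 statements merged into one kernel-verified Lean document; each statement's English description precedes it below -/
import Mathlib

section
/- Let n be a positive integer and let ℓ : Fin n → Fin n → ℤ be a symmetric matrix (ℓ i j = ℓ j i for all i, j), thought of as the matrix of pairwise linking numbers of an n-component link. If for every index i the set Fin n \ {i} is algebraically split with respect to ℓ, then the full index set Fin n is algebraically split with respect to ℓ. -/
/-- A subset `S` of `Fin n` is *algebraically split* with respect to a matrix of
linking numbers `ℓ` if it can be written as the disjoint union of two nonempty
subsets `A` and `B` with `ℓ i j = 0` whenever `i ∈ A` and `j ∈ B`. -/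
def AlgebraicallySplit {n : ℕ} (ℓ : Fin n → Fin n → ℤ) (S : Finset (Fin n)) : Prop :=
  ∃ A B : Finset (Fin n), A.Nonempty ∧ B.Nonempty ∧ Disjoint A B ∧ A ∪ B = S ∧
    ∀ i ∈ A, ∀ j ∈ B, ℓ i j = 0

/-!
Join `i ≠ j` by an edge when `ℓ i j ≠ 0`. For symmetric `ℓ`, a set `S` is algebraically split
exactly when the subgraph induced on `S` is disconnected. If `Fin n` were not split, the graph
would be connected, and a finite connected graph has a vertex `v` (a leaf of a spanning tree)
whose removal leaves it connected; then `{v}ᶜ` is not split.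
-/

namespace SimpleGraph

variable {V : Type*} (G : SimpleGraph V)

theorem not_preconnected_induce_iff [DecidableEq V] {S : Finset V} :
    ¬ (G.induce (S : Set V)).Preconnected ↔
      ∃ A B : Finset V, A.Nonempty ∧ B.Nonempty ∧ Disjoint A B ∧ A ∪ B = S ∧
        ∀ i ∈ A, ∀ j ∈ B, ¬ G.Adj i j := by
  classical
  constructor
  · intro hS
    obtain ⟨a, b, hab⟩ : ∃ a b, ¬ (G.induce (S : Set V)).Reachable a b := by
      simpa [Preconnected] using hS
    let P (x : V) : Prop := ∃ hx : x ∈ S, (G.induce (S : Set V)).Reachable a ⟨x, hx⟩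
    refine ⟨S.filter P, S.filter (¬ P ·), ⟨a, ?_⟩, ⟨b, ?_⟩, Finset.disjoint_filter_filter_not ..,
      Finset.filter_union_filter_not_eq .., ?_⟩
    · simp [P]
    · simpa [P, b.2] using hab
    · intro i hi j hj hij
      simp only [Finset.mem_filter] at hi hj
      obtain ⟨_, hi⟩ := hi.2
      exact hj.2 ⟨hj.1, hi.trans (Adj.reachable (by simpa using hij))⟩
  · rintro ⟨A, B, ⟨a, ha⟩, ⟨b, hb⟩, hAB, rfl, hA⟩ hS
    obtain ⟨p⟩ := hS ⟨a, by simp [ha]⟩ ⟨b, by simp [hb]⟩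
    obtain ⟨d, -, hd, hd'⟩ := p.exists_boundary_dart {x | x.1 ∈ A} ha
      (Finset.disjoint_right.1 hAB hb)
    exact hA _ hd _ ((Finset.mem_union.1 d.snd.2).resolve_left hd') d.adj

theorem preconnected_induce_univ_iff [Fintype V] :
    (G.induce ((Finset.univ : Finset V) : Set V)).Preconnected ↔ G.Preconnected := by
  rw [Finset.coe_univ, (induceUnivIso G).preconnected_iff]

end SimpleGraph

section LinkingGraph

variable {n : ℕ} {ℓ : Fin n → Fin n → ℤ}

def linkingGraph (ℓ : Fin n → Fin n → ℤ) : SimpleGraph (Fin n) :=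
  SimpleGraph.fromRel fun i j => ℓ i j ≠ 0

theorem linkingGraph_adj (hsymm : ∀ i j, ℓ i j = ℓ j i) {i j : Fin n} :
    (linkingGraph ℓ).Adj i j ↔ i ≠ j ∧ ℓ i j ≠ 0 := by
  simp [linkingGraph, hsymm j i]

theorem algebraicallySplit_iff_not_preconnected_induce (hsymm : ∀ i j, ℓ i j = ℓ j i)
    (S : Finset (Fin n)) :
    AlgebraicallySplit ℓ S ↔ ¬ ((linkingGraph ℓ).induce (S : Set (Fin n))).Preconnected := by
  rw [SimpleGraph.not_preconnected_induce_iff, AlgebraicallySplit]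
  refine exists₂_congr fun A B => and_congr_right' <| and_congr_right' <|
    and_congr_right fun hAB => and_congr_right' <| forall₂_congr fun i hi => forall₂_congr
      fun j hj => ?_
  simp [linkingGraph_adj hsymm, ne_of_mem_of_not_mem hi (Finset.disjoint_right.1 hAB hj)]

end LinkingGraph

theorem algebraicallySplit_of_forall_erase {n : ℕ} (hn : 0 < n)
    (ℓ : Fin n → Fin n → ℤ) (hsymm : ∀ i j, ℓ i j = ℓ j i)
    (h : ∀ i : Fin n, AlgebraicallySplit ℓ ({i}ᶜ : Finset (Fin n))) :
    AlgebraicallySplit ℓ (Finset.univ : Finset (Fin n)) := by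
  rw [algebraicallySplit_iff_not_preconnected_induce hsymm,
    SimpleGraph.preconnected_induce_univ_iff]
  intro hpre
  have : Nonempty (Fin n) := ⟨⟨0, hn⟩⟩
  obtain ⟨v, hv⟩ :=
    (SimpleGraph.Connected.mk hpre).exists_preconnected_induce_compl_singleton_of_finite
  exact (algebraicallySplit_iff_not_preconnected_induce hsymm _).1 (h v)
    (by rwa [Finset.coe_compl, Finset.coe_singleton])
end

section
/- Let V be a finite type with at least two elements, let G be a connected simple graph on V, let T be a spanning subgraph of G (a subgraph with vertex set all of V, whose edges are edges of G) whose coercion to a simple graph on V is a tree, and let v ∈ V be a vertex of degree 1 in T. Then the induced subgraph of G on the complement {v}ᶜ is connected. -/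
open SimpleGraph

/-- A path in `T` between two vertices distinct from a degree-one vertex `v`
gives reachability in the graph induced on `{v}ᶜ`, for any `G ≥ T`. -/
private lemma reach_aux {V : Type*} [Fintype V] (G T : SimpleGraph V)
    [DecidableRel T.Adj] (hTG : T ≤ G) (v : V) (hv : T.degree v = 1) :
    ∀ {a b : V} (p : T.Walk a b), p.IsPath → a ≠ v → b ≠ v →
      ∀ (ha : a ∈ ({v}ᶜ : Set V)) (hb : b ∈ ({v}ᶜ : Set V)),
      (G.induce ({v}ᶜ : Set V)).Reachable ⟨a, ha⟩ ⟨b, hb⟩ := by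
  intro a b p
  induction p with
  | nil => intro _ _ _ _ _; rfl
  | @cons a c b h q ih =>
    intro hp hav hbv ha hb
    rw [SimpleGraph.Walk.cons_isPath_iff] at hp
    have hcv : c ≠ v := by
      intro heq
      -- then `a` and `q.getVert 1` are two distinct neighbors of `v`
      have hcb : c ≠ b := fun h' => hbv (h'.symm.trans heq)
      have hqnil : ¬ q.Nil := SimpleGraph.Walk.not_nil_of_ne hcb
      have h1 : T.Adj v (q.getVert 1) := heq ▸ q.adj_snd hqnil
      have hmem : q.getVert 1 ∈ q.support := by
        rw [← q.cons_support_tail hqnil]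
        exact List.mem_cons_of_mem _ q.tail.start_mem_support
      have hne : a ≠ q.getVert 1 := fun he => hp.2 (he ▸ hmem)
      have h2 : a ∈ T.neighborFinset v := by
        rw [SimpleGraph.mem_neighborFinset]; exact heq ▸ h.symm
      have h3 : q.getVert 1 ∈ T.neighborFinset v := by
        rw [SimpleGraph.mem_neighborFinset]; exact h1
      exact hne (Finset.card_le_one.mp (le_of_eq hv) _ h2 _ h3)
    have hc : c ∈ ({v}ᶜ : Set V) := hcv
    have step : (G.induce ({v}ᶜ : Set V)).Adj ⟨a, ha⟩ ⟨c, hc⟩ := by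
      simp only [SimpleGraph.comap_adj, Function.Embedding.coe_subtype]
      exact hTG h
    exact (SimpleGraph.Adj.reachable step).trans (ih hp.1 hcv hbv hc hb)

theorem deletion_of_leaf_of_spanning_tree_connected {V : Type*} [Fintype V]
    (hV : 1 < Fintype.card V) (G : SimpleGraph V) (hG : G.Connected)
    (T : SimpleGraph V) [DecidableRel T.Adj] (hTG : T ≤ G) (hT : T.IsTree)
    (v : V) (hv : T.degree v = 1) :
    (G.induce ({v}ᶜ : Set V)).Connected := by
  have hne : Nonempty ({v}ᶜ : Set V) := by
    obtain ⟨w, hw⟩ := Fintype.exists_ne_of_one_lt_card hV v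
    exact ⟨⟨w, hw⟩⟩
  rw [SimpleGraph.connected_iff]
  refine ⟨fun a b => ?_, hne⟩
  obtain ⟨a, ha⟩ := a
  obtain ⟨b, hb⟩ := b
  classical
  obtain ⟨w⟩ := hT.isConnected a b
  exact reach_aux G T hTG v hv (w.toPath : T.Walk a b) w.toPath.2 ha hb ha hb
end

section
/- Let n be a natural number, let R = AddMonoidAlgebra ℤ (Fin n → ℤ) be the ring of integral Laurent polynomials in n variables, and let ι : R → R be the ring automorphism induced by the negation automorphism ν ↦ −ν of the exponent group Fin n → ℤ. Let ε ∈ {1, −1} ⊆ ℤ, let P ∈ R be nonzero with ι(P) = ε • P, and let ν : Fin n → ℤ. If the element f = (single ν 1) * P also satisfies ι(f) = ε • f, then ν = 0. -/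
/-!
Applying `ι` to `t^ν P` and using both symmetries gives `t^{-ν} ι(P) = t^ν ι(P)`. The group ring
`ℤ[ℤⁿ]` is a domain (`ℤⁿ` has unique sums), so `t^{-ν} = t^ν`, and `ℤⁿ` is torsion-free.
-/

open AddMonoidAlgebra

theorem AddMonoidAlgebra.single_mul_left_injective {R G : Type*} [Semiring R] [AddMonoid G]
    [IsRightCancelMulZero (AddMonoidAlgebra R G)] {r : R} (hr : r ≠ 0)
    {Q : AddMonoidAlgebra R G} (hQ : Q ≠ 0) :
    Function.Injective fun g : G => single g r * Q :=
  fun _ _ h => single_left_injective hr (mul_right_cancel₀ hQ h)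

theorem monomial_trivial_of_symmetric_general {n : ℕ}
    (ι : AddMonoidAlgebra ℤ (Fin n → ℤ) ≃ₐ[ℤ] AddMonoidAlgebra ℤ (Fin n → ℤ))
    (hι : ι = AddMonoidAlgebra.domCongr ℤ ℤ (AddEquiv.neg (Fin n → ℤ)))
    (ε : ℤ)
    (P : AddMonoidAlgebra ℤ (Fin n → ℤ)) (hP : P ≠ 0) (hPsym : ι P = ε • P)
    (ν : Fin n → ℤ)
    (hf : ι (AddMonoidAlgebra.single ν 1 * P) = ε • (AddMonoidAlgebra.single ν 1 * P)) :
    ν = 0 := by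
  have hshift : single (-ν) 1 * ι P = single ν 1 * ι P :=
    calc single (-ν) 1 * ι P = ι (single ν 1 * P) := by rw [map_mul, hι, domCongr_single]; rfl
      _ = ε • (single ν 1 * P) := hf
      _ = single ν 1 * ι P := by rw [hPsym, mul_smul_comm]
  have hιP : ι P ≠ 0 := (map_ne_zero_iff ι ι.injective).mpr hP
  exact self_eq_neg.mp (single_mul_left_injective one_ne_zero hιP hshift).symm

theorem monomial_trivial_of_symmetric {n : ℕ}
    (ι : AddMonoidAlgebra ℤ (Fin n → ℤ) ≃ₐ[ℤ] AddMonoidAlgebra ℤ (Fin n → ℤ))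
    (hι : ι = AddMonoidAlgebra.domCongr ℤ ℤ (AddEquiv.neg (Fin n → ℤ)))
    (ε : ℤ) (hε : ε ∈ ({1, -1} : Set ℤ))
    (P : AddMonoidAlgebra ℤ (Fin n → ℤ)) (hP : P ≠ 0) (hPsym : ι P = ε • P)
    (ν : Fin n → ℤ)
    (hf : ι (AddMonoidAlgebra.single ν 1 * P) = ε • (AddMonoidAlgebra.single ν 1 * P)) :
    ν = 0 :=
  monomial_trivial_of_symmetric_general ι hι ε P hP hPsym ν hf
end

section
/- Let n be a natural number and let A be an n × n matrix with integer entries. Form the n × n matrix M over the ring of one-variable integral Laurent polynomials with entries M i j = T(−1) * (A i j) − T(1) * (A j i), where T(k) is the monomial t^k (so M = t⁻¹A − tAᵀ). Then the coefficient of degree n of the Laurent polynomial det M equals (−1)^n * det A; moreover the coefficient of det M vanishes in every degree greater than n. -/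
open LaurentPolynomial
open scoped Matrix

/-!
Every entry of `M = t⁻¹A - tAᵀ` has degree at most `1`, with `t`-coefficient `-Aᵀ`. Hence in the
Leibniz expansion each of the `n!` products has degree at most `n`, and its degree-`n` coefficient
is the product of the `t`-coefficients of its factors; summing, the degree-`n` coefficient of
`det M` is `det (-Aᵀ) = (-1)ⁿ det A`.
-/

namespace LaurentPolynomial

variable {R : Type*}

lemma coeff_T_mul_intCast [Ring R] (k a d : ℤ) :
    (T k * (a : R[T;T⁻¹])).coeff d = if k = d then (a : R) else 0 := by
  rw [← map_intCast (C (R := R)), T_mul, ← single_eq_C_mul_T, AddMonoidAlgebra.coeff_single,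
    Finsupp.single_apply]

section Semiring

variable [Semiring R] {f g : R[T;T⁻¹]} {m k : ℤ}

lemma le_of_mem_support_coeff (hf : ∀ d, m < d → f.coeff d = 0) {a : ℤ}
    (ha : a ∈ f.coeff.support) : a ≤ m :=
  not_lt.1 fun h => Finsupp.mem_support_iff.1 ha (hf a h)

lemma coeff_mul_eq_zero_of_lt (hf : ∀ d, m < d → f.coeff d = 0)
    (hg : ∀ d, k < d → g.coeff d = 0) {d : ℤ} (hd : m + k < d) : (f * g).coeff d = 0 := by
  classical
  by_contra h
  obtain ⟨a, ha, b, hb, rfl⟩ :=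
    Finset.mem_add.1 (AddMonoidAlgebra.support_coeff_mul_subset f g (Finsupp.mem_support_iff.2 h))
  have := le_of_mem_support_coeff hf ha
  have := le_of_mem_support_coeff hg hb
  omega

lemma coeff_mul_add (hf : ∀ d, m < d → f.coeff d = 0)
    (hg : ∀ d, k < d → g.coeff d = 0) : (f * g).coeff (m + k) = f.coeff m * g.coeff k := by
  refine AddMonoidAlgebra.coeff_mul_add_of_uniqueAdd fun a b ha hb hab => ?_
  have := le_of_mem_support_coeff hf ha
  have := le_of_mem_support_coeff hg hb
  omega

end Semiring

section CommSemiring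

variable [CommSemiring R] {ι : Type*} {s : Finset ι} {p : ι → R[T;T⁻¹]} {deg : ι → ℤ}

lemma coeff_prod_eq_zero_of_lt (h : ∀ i ∈ s, ∀ d, deg i < d → (p i).coeff d = 0) :
    ∀ d, ∑ i ∈ s, deg i < d → (∏ i ∈ s, p i).coeff d = 0 := by
  classical
  induction s using Finset.induction with
  | empty =>
    intro d hd
    rw [Finset.prod_empty, ← single_zero_one_eq_one, AddMonoidAlgebra.coeff_single,
      Finsupp.single_eq_of_ne]
    simpa using hd.ne'
  | insert a s ha ih =>
    intro d hd
    rw [Finset.prod_insert ha]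
    rw [Finset.sum_insert ha] at hd
    exact coeff_mul_eq_zero_of_lt (h a (s.mem_insert_self a))
      (ih fun i hi => h i (Finset.mem_insert_of_mem hi)) hd

lemma coeff_prod_sum (h : ∀ i ∈ s, ∀ d, deg i < d → (p i).coeff d = 0) :
    (∏ i ∈ s, p i).coeff (∑ i ∈ s, deg i) = ∏ i ∈ s, (p i).coeff (deg i) := by
  classical
  induction s using Finset.induction with
  | empty =>
    rw [Finset.prod_empty, Finset.sum_empty, Finset.prod_empty, ← single_zero_one_eq_one,
      AddMonoidAlgebra.coeff_single, Finsupp.single_eq_same]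
  | insert a s ha ih =>
    have hs : ∀ i ∈ s, ∀ d, deg i < d → (p i).coeff d = 0 :=
      fun i hi => h i (Finset.mem_insert_of_mem hi)
    rw [Finset.prod_insert ha, Finset.sum_insert ha, Finset.prod_insert ha,
      coeff_mul_add (h a (s.mem_insert_self a)) (coeff_prod_eq_zero_of_lt hs), ih hs]

end CommSemiring

section Det

variable [CommRing R] {n : Type*} [Fintype n] [DecidableEq n] {M : Matrix n n R[T;T⁻¹]}

lemma coeff_det (d : ℤ) :
    M.det.coeff d = ∑ σ : Equiv.Perm n, Equiv.Perm.sign σ • (∏ i, M (σ i) i).coeff d := by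
  rw [Matrix.det_apply, AddMonoidAlgebra.coeff_sum, Finset.sum_apply']
  simp [AddMonoidAlgebra.coeff_smul]

lemma coeff_det_eq_zero_of_lt (hM : ∀ i j d, 1 < d → (M i j).coeff d = 0) {d : ℤ}
    (hd : Fintype.card n < d) : M.det.coeff d = 0 := by
  rw [coeff_det]
  refine Finset.sum_eq_zero fun σ _ => smul_eq_zero_of_right _ ?_
  refine coeff_prod_eq_zero_of_lt (deg := fun _ => 1) (fun i _ => hM (σ i) i) d ?_
  simpa using hd

lemma coeff_det_card (hM : ∀ i j d, 1 < d → (M i j).coeff d = 0) :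
    M.det.coeff (Fintype.card n) = (M.map fun p => p.coeff 1).det := by
  rw [coeff_det, Matrix.det_apply]
  refine Finset.sum_congr rfl fun σ _ => congrArg _ ?_
  simpa using coeff_prod_sum (s := Finset.univ) (deg := fun _ => 1) fun i _ => hM (σ i) i

end Det

end LaurentPolynomial

theorem leading_coeff_kauffman_det {n : ℕ} (A : Matrix (Fin n) (Fin n) ℤ)
    (M : Matrix (Fin n) (Fin n) (LaurentPolynomial ℤ))
    (hM : ∀ i j, M i j = T (-1) * ((A i j : ℤ) : LaurentPolynomial ℤ)
        - T 1 * ((A j i : ℤ) : LaurentPolynomial ℤ)) :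
    M.det.coeff (n : ℤ) = (-1 : ℤ) ^ n * A.det ∧ ∀ d : ℤ, (n : ℤ) < d → M.det.coeff d = 0 := by
  have hentry : ∀ i j d,
      (M i j).coeff d = (if -1 = d then A i j else 0) - if 1 = d then A j i else 0 := by
    intro i j d
    simp only [hM, AddMonoidAlgebra.coeff_sub, Finsupp.sub_apply, coeff_T_mul_intCast,
      Int.cast_id]
  have hdeg : ∀ i j d, 1 < d → (M i j).coeff d = 0 := fun i j d hd => by
    rw [hentry, if_neg (by omega), if_neg (by omega), sub_zero]
  have htop : M.map (fun p => p.coeff 1) = -Aᵀ := by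
    ext i j
    simp [hentry]
  refine ⟨?_, fun d hd => coeff_det_eq_zero_of_lt hdeg (by simpa using hd)⟩
  simpa [htop, Matrix.det_neg] using coeff_det_card hdeg
end
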